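/- Let H_i : ℝ^i → ℝ^i be the EBE iteration map defined componentwise by H_{i,2}(λ) = λ_i − (∂F_i/∂λ_i(λ))⁻¹ F_i(λ) and H_{i,1}(λ) = g_i − (D_{λ_{i-1}}F_{i-1}(g_i, H_{i,2}))⁻¹ F_{i-1}(g_i, H_{i,2}), where g_i = λ_{i-1} − (D_{λ_{i-1}}F_{i-1}(λ))⁻¹ (∂F_{i-1}/∂λ_i(λ)) (H_{i,2}(λ) − λ_i). If μ ∈ ℝ^i is a fixed point of H_i such that the Jacobian block D_{λ_{i-1}}F_{i-1}(μ) is nonsingular and ∂F_i/∂λ_i(μ) ≠ 0, then F_i(μ) = 0, i.e., μ is a root of the full i-dimensional system (F_{i-1}(μ), F_i(μ)) = 0. -/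
import Mathlib


open Matrix

/-- A fixed point of the EBE iteration map `H_i` (with nonsingular Jacobian block
`D_{λ_{i-1}}F_{i-1}(μ)` and `∂F_i/∂λ_i(μ) ≠ 0`) is a root of the full `i`-dimensional system. -/
theorem ebe_fixed_point_is_root {m : ℕ}
    (Fm : (Fin m → ℝ) × ℝ → Fin m → ℝ)      -- F_{i-1} : ℝ^{i-1} × ℝ → ℝ^{i-1}
    (Fi : (Fin m → ℝ) × ℝ → ℝ)              -- F_i
    (J : (Fin m → ℝ) × ℝ → Matrix (Fin m) (Fin m) ℝ)  -- D_{λ_{i-1}} F_{i-1}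
    (w : (Fin m → ℝ) × ℝ → Fin m → ℝ)       -- ∂F_{i-1}/∂λ_i
    (dFi : (Fin m → ℝ) × ℝ → ℝ)             -- ∂F_i/∂λ_i
    (H2 : (Fin m → ℝ) × ℝ → ℝ)
    (g : (Fin m → ℝ) × ℝ → Fin m → ℝ)
    (H1 : (Fin m → ℝ) × ℝ → Fin m → ℝ)
    (hH2 : ∀ p, H2 p = p.2 - (dFi p)⁻¹ * Fi p)
    (hg : ∀ p, g p = p.1 - (H2 p - p.2) • ((J p)⁻¹ *ᵥ w p))
    (hH1 : ∀ p, H1 p = g p - (J (g p, H2 p))⁻¹ *ᵥ Fm (g p, H2 p))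
    (μ : (Fin m → ℝ) × ℝ)
    (hfix1 : H1 μ = μ.1) (hfix2 : H2 μ = μ.2)
    (hJ : IsUnit (J μ).det)
    (hd : dFi μ ≠ 0) :
    Fm μ = 0 ∧ Fi μ = 0 := by
  have h2 := hH2 μ
  rw [hfix2] at h2
  have hFi : Fi μ = 0 := by
    have : (dFi μ)⁻¹ * Fi μ = 0 := by linarith
    rcases mul_eq_zero.mp this with h | h
    · exact absurd h (inv_ne_zero hd)
    · exact h
  have hgμ : g μ = μ.1 := by
    rw [hg μ, hfix2]
    simp
  have h1 := hH1 μ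
  rw [hgμ, hfix2] at h1
  have hμ : (μ.1, μ.2) = μ := Prod.mk.eta
  rw [hμ, hfix1] at h1
  have hmv : (J μ)⁻¹ *ᵥ Fm μ = 0 := by
    have := congrArg (fun v => μ.1 - v) h1.symm
    simpa using this
  have hFm : Fm μ = 0 := by
    have := congrArg (fun v => J μ *ᵥ v) hmv
    simpa [Matrix.mulVec_mulVec, Matrix.mul_nonsing_inv _ hJ] using this
  exact ⟨hFm, hFi⟩
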